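/- For every z > 0, the function γ ↦ m(−z; γ) is strictly increasing on (0, ∞): if 0 < γ₁ < γ₂ then m(−z; γ₁) < m(−z; γ₂). -/

import Mathlib

/-!
Rationalizing the numerator gives `m(-z; γ) = 2 / (2z + (√(t² + 4z) - t))` with `t = γ + z - 1`,
since the discriminant `(1 - γ + z)² + 4γz` equals `t² + 4z`. The map `t ↦ √(t² + c) - t` is
positive and strictly decreasing for `c > 0`, so the denominator decreases and `m` increases in `γ`.
-/

open Real Set

noncomputable def mpStieltjesNeg (z γ : ℝ) : ℝ :=
  (-(1 - γ + z) + √((1 - γ + z) ^ 2 + 4 * γ * z)) / (2 * γ * z)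

lemma lt_sqrt_sq_add {c : ℝ} (hc : 0 < c) (t : ℝ) : t < √(t ^ 2 + c) :=
  calc t ≤ |t| := le_abs_self t
    _ = √(t ^ 2) := (sqrt_sq_eq_abs t).symm
    _ < √(t ^ 2 + c) := sqrt_lt_sqrt (sq_nonneg t) (lt_add_of_pos_right _ hc)

lemma strictAnti_sqrt_sq_add_sub {c : ℝ} (hc : 0 < c) :
    StrictAnti fun t : ℝ => √(t ^ 2 + c) - t := by
  intro s t hst
  show √(t ^ 2 + c) - t < √(s ^ 2 + c) - s
  have hs := lt_sqrt_sq_add hc s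
  have ht := lt_sqrt_sq_add hc t
  have hs2 := sq_sqrt (by positivity : 0 ≤ s ^ 2 + c)
  have ht2 := sq_sqrt (by positivity : 0 ≤ t ^ 2 + c)
  -- `(√(t²+c) - √(s²+c)) (√(t²+c) + √(s²+c)) = (t - s)(t + s)` and `t + s < √(t²+c) + √(s²+c)`
  nlinarith [mul_lt_mul_of_pos_left (add_lt_add hs ht) (sub_pos.2 hst),
    sqrt_nonneg (s ^ 2 + c), sqrt_nonneg (t ^ 2 + c)]

lemma mpStieltjesNeg_eq {z γ : ℝ} (hz : 0 < z) (hγ : γ ≠ 0) :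
    mpStieltjesNeg z γ = 2 / (2 * z + (√((γ + z - 1) ^ 2 + 4 * z) - (γ + z - 1))) := by
  have hdisc : (1 - γ + z) ^ 2 + 4 * γ * z = (γ + z - 1) ^ 2 + 4 * z := by ring
  have hsq := sq_sqrt (by positivity : 0 ≤ (γ + z - 1) ^ 2 + 4 * z)
  have hden : 0 < 2 * z + (√((γ + z - 1) ^ 2 + 4 * z) - (γ + z - 1)) := by
    linarith [lt_sqrt_sq_add (by positivity : 0 < 4 * z) (γ + z - 1)]
  rw [mpStieltjesNeg, hdisc, div_eq_div_iff (by positivity) hden.ne']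
  linear_combination hsq

theorem mpStieltjesNeg_strictMonoOn {z : ℝ} (hz : 0 < z) :
    StrictMonoOn (mpStieltjesNeg z) (Ioi 0) := by
  intro γ₁ h1 γ₂ h2 h12
  have hf := strictAnti_sqrt_sq_add_sub (by positivity : 0 < 4 * z)
  rw [mpStieltjesNeg_eq hz (ne_of_gt h1), mpStieltjesNeg_eq hz (ne_of_gt h2)]
  refine div_lt_div_of_pos_left two_pos ?_ ?_
  · linarith [lt_sqrt_sq_add (by positivity : 0 < 4 * z) (γ₂ + z - 1)]
  · linarith [hf (by linarith : γ₁ + z - 1 < γ₂ + z - 1)]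

theorem stmt13 (z : ℝ) (hz : 0 < z) (γ₁ γ₂ : ℝ) (h1 : 0 < γ₁) (h12 : γ₁ < γ₂) :
    (-(1 - γ₁ + z) + Real.sqrt ((1 - γ₁ + z) ^ 2 + 4 * γ₁ * z)) / (2 * γ₁ * z) <
    (-(1 - γ₂ + z) + Real.sqrt ((1 - γ₂ + z) ^ 2 + 4 * γ₂ * z)) / (2 * γ₂ * z) :=
  mpStieltjesNeg_strictMonoOn hz h1 (h1.trans h12) h12
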